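/- Define F̄(S) = ‖B - P^{(S)} B‖_F² where B = AΩ. For any P ⊂ S with R = S \ P, F̄(S) = F̄(P) - ‖R^{(R)} F‖_F², where E = A - P^{(P)} A, F = B - P^{(P)} B, and R^{(R)} = E_{:R}(E_{:R}ᵀE_{:R})⁻¹E_{:R}ᵀ. -/

import Mathlib

/-!
Write `Q = P^{(P)}` and `R = R^{(R)}`. The residual `E = A - Q A` satisfies `Q E = 0` and
vanishes on the columns in `P`, so `R Q = 0`. Both `Q + R` and `P^{(S)}` fix the columns of
`A_{:S}` and each absorbs the other; two symmetric matrices with `X Y = Y` and `Y X = X` are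
equal, so `P^{(S)} = Q + R`. Hence `B - P^{(S)} B = F - R F`, and Pythagoras for the orthogonal
projection `R` gives the identity.
-/

open Matrix BigOperators

noncomputable section

/-- The submatrix of `A` consisting of the columns indexed by `S`. -/
def cols {m n : ℕ} (A : Matrix (Fin m) (Fin n) ℝ) (S : Finset (Fin n)) :
    Matrix (Fin m) {j // j ∈ S} ℝ :=
  Matrix.of fun i j => A i j.1

/-- Orthogonal projection matrix onto the column span of `C`,
`C (Cᵀ C)⁻¹ Cᵀ`. -/
def projM {m : ℕ} {k : Type} [Fintype k] [DecidableEq k]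
    (C : Matrix (Fin m) k ℝ) : Matrix (Fin m) (Fin m) ℝ :=
  C * (Cᵀ * C)⁻¹ * Cᵀ

/-- Squared Frobenius norm. -/
def frobSq {a b : Type} [Fintype a] [Fintype b] (A : Matrix a b ℝ) : ℝ :=
  ∑ i, ∑ j, (A i j) ^ 2

section Cols

variable {m n : ℕ}

lemma cols_add (A B : Matrix (Fin m) (Fin n) ℝ) (S : Finset (Fin n)) :
    cols (A + B) S = cols A S + cols B S := rfl

lemma cols_sub (A B : Matrix (Fin m) (Fin n) ℝ) (S : Finset (Fin n)) :
    cols (A - B) S = cols A S - cols B S := rfl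

lemma cols_mul (M : Matrix (Fin m) (Fin m) ℝ) (A : Matrix (Fin m) (Fin n) ℝ)
    (S : Finset (Fin n)) : cols (M * A) S = M * cols A S := by
  ext i j
  simp [cols, Matrix.mul_apply]

lemma cols_eq_of_subset {A B : Matrix (Fin m) (Fin n) ℝ} {S T : Finset (Fin n)}
    (h : cols A S = cols B S) (hTS : T ⊆ S) : cols A T = cols B T := by
  ext i j
  exact congrFun (congrFun h i) ⟨j, hTS j.2⟩

lemma cols_eq_of_sdiff {A B : Matrix (Fin m) (Fin n) ℝ} {S P : Finset (Fin n)}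
    (hP : cols A P = cols B P) (hR : cols A (S \ P) = cols B (S \ P)) : cols A S = cols B S := by
  ext i ⟨j, hj⟩
  by_cases hjP : j ∈ P
  · exact congrFun (congrFun hP i) ⟨j, hjP⟩
  · exact congrFun (congrFun hR i) ⟨j, Finset.mem_sdiff.mpr ⟨hj, hjP⟩⟩

end Cols

lemma eq_of_mul_eq_of_mul_eq {ι R : Type*} [Fintype ι] [CommSemiring R] {X Y : Matrix ι ι R}
    (hX : Xᵀ = X) (hY : Yᵀ = Y) (hXY : X * Y = Y) (hYX : Y * X = X) : X = Y :=
  calc X = (Y * X)ᵀ := by rw [hYX, hX]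
    _ = X * Y := by rw [transpose_mul, hX, hY]
    _ = Y := hXY

section Projection

variable {m : ℕ} {k : Type} [Fintype k] [DecidableEq k] {C : Matrix (Fin m) k ℝ}

lemma transpose_projM (C : Matrix (Fin m) k ℝ) : (projM C)ᵀ = projM C := by
  rw [projM, transpose_mul, transpose_mul, transpose_transpose, transpose_nonsing_inv,
    transpose_mul, transpose_transpose, Matrix.mul_assoc]

lemma projM_mul_self (hC : IsUnit (Cᵀ * C)) : projM C * C = C := by
  rw [projM, Matrix.mul_assoc, Matrix.mul_assoc,
    nonsing_inv_mul _ ((isUnit_iff_isUnit_det _).mp hC), Matrix.mul_one]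

lemma mul_projM_of_mul_eq {M : Matrix (Fin m) (Fin m) ℝ} (h : M * C = C) :
    M * projM C = projM C := by
  rw [projM, ← Matrix.mul_assoc, ← Matrix.mul_assoc, h]

lemma projM_mul_projM (hC : IsUnit (Cᵀ * C)) : projM C * projM C = projM C :=
  mul_projM_of_mul_eq (projM_mul_self hC)

lemma projM_mul_eq_zero {M : Matrix (Fin m) (Fin m) ℝ} (h : Cᵀ * M = 0) : projM C * M = 0 := by
  rw [projM, Matrix.mul_assoc, h, Matrix.mul_zero]

end Projection

lemma frobSq_eq_trace {a b : Type} [Fintype a] [Fintype b] (X : Matrix a b ℝ) :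
    frobSq X = trace (Xᵀ * X) := by
  simp only [frobSq, trace, diag, mul_apply, transpose_apply, sq]
  exact Finset.sum_comm

lemma frobSq_sub_mul_self {a b : Type} [Fintype a] [Fintype b] {Q : Matrix a a ℝ}
    (hQ : Qᵀ = Q) (hQQ : Q * Q = Q) (F : Matrix a b ℝ) :
    frobSq (F - Q * F) = frobSq F - frobSq (Q * F) := by
  have hQF : (Q * F)ᵀ * (Q * F) = Fᵀ * (Q * F) := by
    rw [transpose_mul, hQ, Matrix.mul_assoc, ← Matrix.mul_assoc Q, hQQ]
  have hQF' : (Q * F)ᵀ * F = Fᵀ * (Q * F) := by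
    rw [transpose_mul, hQ, Matrix.mul_assoc]
  rw [frobSq_eq_trace, frobSq_eq_trace, frobSq_eq_trace, transpose_sub, Matrix.sub_mul,
    Matrix.mul_sub, Matrix.mul_sub, hQF, hQF', sub_self, sub_zero, trace_sub]

section Residual

variable {m n : ℕ} {A : Matrix (Fin m) (Fin n) ℝ} {S P : Finset (Fin n)}

lemma projM_mul_residual (hP : IsUnit ((cols A P)ᵀ * cols A P)) :
    projM (cols A P) * (A - projM (cols A P) * A) = 0 := by
  rw [Matrix.mul_sub, ← Matrix.mul_assoc, projM_mul_projM hP, sub_self]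

lemma projM_residual_mul_projM (hP : IsUnit ((cols A P)ᵀ * cols A P)) (T : Finset (Fin n)) :
    projM (cols (A - projM (cols A P) * A) T) * projM (cols A P) = 0 := by
  apply projM_mul_eq_zero
  have h := congrArg transpose (congrArg (cols · T) (projM_mul_residual hP))
  rwa [cols_mul, transpose_mul, transpose_projM] at h

lemma projM_cols_eq_add (hPS : P ⊆ S) (hS : IsUnit ((cols A S)ᵀ * cols A S))
    (hP : IsUnit ((cols A P)ᵀ * cols A P))
    (hR : IsUnit ((cols (A - projM (cols A P) * A) (S \ P))ᵀ *
      cols (A - projM (cols A P) * A) (S \ P))) :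
    projM (cols A S) =
      projM (cols A P) + projM (cols (A - projM (cols A P) * A) (S \ P)) := by
  set Q := projM (cols A P)
  set E := A - Q * A with hE
  set QR := projM (cols E (S \ P))
  set QS := projM (cols A S)
  have hQRQ : QR * Q = 0 := projM_residual_mul_projM hP _
  have hQRA : QR * A = QR * E := by
    rw [hE, Matrix.mul_sub, ← Matrix.mul_assoc, hQRQ, Matrix.zero_mul, sub_zero]
  have hEP : cols E P = 0 := by
    rw [hE, cols_sub, cols_mul, projM_mul_self hP, sub_self]
  have hsum_fix : (Q + QR) * cols A S = cols A S := by
    have hQRE : cols (QR * E) S = cols E S :=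
      cols_eq_of_sdiff (by rw [cols_mul, hEP, Matrix.mul_zero])
        (by rw [cols_mul, projM_mul_self hR])
    rw [← cols_mul, Matrix.add_mul, hQRA, cols_add, hQRE, ← cols_add, hE, add_sub_cancel]
  have hQS_fix : cols (QS * A) S = cols A S := by rw [cols_mul, projM_mul_self hS]
  have hQSQ : QS * Q = Q :=
    mul_projM_of_mul_eq (by rw [← cols_mul]; exact cols_eq_of_subset hQS_fix hPS)
  have hQSQR : QS * QR = QR := by
    refine mul_projM_of_mul_eq ?_
    rw [← cols_mul, hE, Matrix.mul_sub, ← Matrix.mul_assoc, hQSQ, cols_sub, cols_sub,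
      cols_eq_of_subset hQS_fix Finset.sdiff_subset]
  refine eq_of_mul_eq_of_mul_eq (transpose_projM _) ?_ ?_ (mul_projM_of_mul_eq hsum_fix)
  · rw [transpose_add, transpose_projM, transpose_projM]
  · rw [Matrix.mul_add, hQSQ, hQSQR]

end Residual

theorem stmt14 {m n r : ℕ} (A : Matrix (Fin m) (Fin n) ℝ)
    (Ω : Matrix (Fin n) (Fin r) ℝ) (S P : Finset (Fin n)) (hPS : P ⊂ S)
    (hS : IsUnit ((cols A S)ᵀ * cols A S))
    (hP : IsUnit ((cols A P)ᵀ * cols A P))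
    (hR : IsUnit ((cols (A - projM (cols A P) * A) (S \ P))ᵀ *
      cols (A - projM (cols A P) * A) (S \ P))) :
    frobSq (A * Ω - projM (cols A S) * (A * Ω)) =
      frobSq (A * Ω - projM (cols A P) * (A * Ω)) -
        frobSq (projM (cols (A - projM (cols A P) * A) (S \ P)) *
          (A * Ω - projM (cols A P) * (A * Ω))) := by
  rw [projM_cols_eq_add hPS.subset hS hP hR]
  set Q := projM (cols A P)
  set QR := projM (cols (A - Q * A) (S \ P))
  have hresidual : A * Ω - (Q + QR) * (A * Ω) =
      (A * Ω - Q * (A * Ω)) - QR * (A * Ω - Q * (A * Ω)) := by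
    rw [Matrix.mul_sub, ← Matrix.mul_assoc QR Q, projM_residual_mul_projM hP, Matrix.zero_mul,
      sub_zero, Matrix.add_mul]
    abel
  rw [hresidual, frobSq_sub_mul_self (transpose_projM _) (projM_mul_projM hR)]
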